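/- Suppose the paired-autoencoder surrogate satisfies ‖y − d_y(m⁺(e_x(x)))‖ ≤ δ for a data pair (x, y), the model autoencoder satisfies ‖d_x(e_x(x)) − x‖ ≤ ε_x, the latent round-trip satisfies ‖m⁻(m⁺(t)) − t‖ ≤ γ_m for all t ∈ Z_X, and d_x, m⁻, e_y are Lipschitz with constants L_{d_x}, L_{m⁻}, L_{e_y}. If furthermore the expansion condition ‖v₁ − v₂‖ ≤ ‖e_y(d_y(v₁)) − e_y(d_y(v₂))‖ holds on Z_Y, then for any latent point ẑ ∈ Z_Y, ‖d_x(m⁻(ẑ)) − x‖ ≤ L_{d_x}·( L_{m⁻}·L_{e_y}·( ‖d_y(ẑ) − y‖ + δ ) + γ_m ) + ε_x. -/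
import Mathlib

/-- Intermediate LSI error bound (no projection): for any latent
point `ẑ ∈ Z_Y`,
`‖d_x (m⁻ ẑ) - x‖ ≤ L_{d_x} (L_{m⁻} L_{e_y} (‖d_y ẑ - y‖ + δ) + γ_m) + ε_x`. -/
theorem stmt10 {X Y ZX ZY : Type*}
    [NormedAddCommGroup X] [NormedAddCommGroup Y]
    [NormedAddCommGroup ZX] [NormedAddCommGroup ZY]
    (ex : X → ZX) (ey : Y → ZY) (dx : ZX → X) (dy : ZY → Y)
    (mfwd : ZX → ZY) (mbwd : ZY → ZX)
    (Ldx Lmb Ley εx γm δ : ℝ)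
    (hLdx : 0 ≤ Ldx) (hLmb : 0 ≤ Lmb) (hLey : 0 ≤ Ley)
    (hdxLip : ∀ t₁ t₂ : ZX, ‖dx t₁ - dx t₂‖ ≤ Ldx * ‖t₁ - t₂‖)
    (hmbLip : ∀ v₁ v₂ : ZY, ‖mbwd v₁ - mbwd v₂‖ ≤ Lmb * ‖v₁ - v₂‖)
    (heyLip : ∀ w₁ w₂ : Y, ‖ey w₁ - ey w₂‖ ≤ Ley * ‖w₁ - w₂‖)
    (x : X) (y : Y)
    (hsurr : ‖y - dy (mfwd (ex x))‖ ≤ δ)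
    (haex : ‖dx (ex x) - x‖ ≤ εx)
    (hmm : ∀ t : ZX, ‖mbwd (mfwd t) - t‖ ≤ γm)
    (hexp : ∀ v₁ v₂ : ZY, ‖v₁ - v₂‖ ≤ ‖ey (dy v₁) - ey (dy v₂)‖)
    (zhat : ZY) :
    ‖dx (mbwd zhat) - x‖ ≤ Ldx * (Lmb * Ley * (‖dy zhat - y‖ + δ) + γm) + εx := by
  have h1 : ‖zhat - mfwd (ex x)‖ ≤ Ley * (‖dy zhat - y‖ + δ) :=
    calc ‖zhat - mfwd (ex x)‖ ≤ ‖ey (dy zhat) - ey (dy (mfwd (ex x)))‖ := hexp _ _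
      _ ≤ Ley * ‖dy zhat - dy (mfwd (ex x))‖ := heyLip _ _
      _ ≤ Ley * (‖dy zhat - y‖ + ‖y - dy (mfwd (ex x))‖) :=
          mul_le_mul_of_nonneg_left (norm_sub_le_norm_sub_add_norm_sub _ _ _) hLey
      _ ≤ Ley * (‖dy zhat - y‖ + δ) :=
          mul_le_mul_of_nonneg_left (by linarith) hLey
  have h2 : ‖mbwd zhat - ex x‖ ≤ Lmb * Ley * (‖dy zhat - y‖ + δ) + γm :=
    calc ‖mbwd zhat - ex x‖
        ≤ ‖mbwd zhat - mbwd (mfwd (ex x))‖ + ‖mbwd (mfwd (ex x)) - ex x‖ :=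
          norm_sub_le_norm_sub_add_norm_sub _ _ _
      _ ≤ Lmb * ‖zhat - mfwd (ex x)‖ + γm := add_le_add (hmbLip _ _) (hmm _)
      _ ≤ Lmb * (Ley * (‖dy zhat - y‖ + δ)) + γm := by
          have := mul_le_mul_of_nonneg_left h1 hLmb; linarith
      _ = Lmb * Ley * (‖dy zhat - y‖ + δ) + γm := by ring
  calc ‖dx (mbwd zhat) - x‖
      ≤ ‖dx (mbwd zhat) - dx (ex x)‖ + ‖dx (ex x) - x‖ :=
        norm_sub_le_norm_sub_add_norm_sub _ _ _
    _ ≤ Ldx * ‖mbwd zhat - ex x‖ + εx := add_le_add (hdxLip _ _) haex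
    _ ≤ Ldx * (Lmb * Ley * (‖dy zhat - y‖ + δ) + γm) + εx := by
        have := mul_le_mul_of_nonneg_left h2 hLdx; linarith
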